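/- arXiv:1202.2001 — 10 statements merged into one kernel-verified Lean document; each statement's English description precedes it below -/
import Mathlib

section
/- T is a conservative extension of ZF: for every L₀-sentence φ, T ⊨ φ' if and only if ZF ⊨ φ, where φ' is the image of φ under the language inclusion L₀ ↪ L'. -/
/-!
An `L'`-structure whose `L₀`-reduct is `M` is a model of `T` exactly when `M ⊨ ZF` and `br` is
the identity. The `L₀`-instances of the two schemes are images of `L'`-instances; conversely,
once `br` is the identity, every `L'`-formula is equivalent to the `L₀`-formula obtained by
erasing `br`, so the `L'`-instances reduce to `L₀`-instances. Since every model of ZF expands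
(with `br` the identity) and every model of `T` has a reduct, while `φ` and its image hold in
the same structures, the two consequence relations agree on `L₀`-sentences.
-/

open FirstOrder FirstOrder.Language

universe u

namespace SMTPaper

/-- The relation symbols of both `L₀` and `L'`: a single binary membership relation `∈'`. -/
inductive MemRel : ℕ → Type
  | mem : MemRel 2

/-- The function symbols of `L'`: a single unary function symbol `br`. -/
inductive BrFun : ℕ → Type
  | br : BrFun 1

/-- `L₀`: the language with exactly one binary relation symbol (membership) and no
function symbols. -/
def L₀ : Language := ⟨fun _ => Empty, MemRel⟩

/-- `L'`: the language extending `L₀` by exactly one unary function symbol `br`. -/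
def L' : Language := ⟨BrFun, MemRel⟩

/-- The language inclusion `L₀ ↪ L'`. -/
def incl : L₀ →ᴸ L' where
  onFunction := fun _ f => Empty.elim f
  onRelation := fun _ r => r

/-- The membership symbol of `L₀`. -/
def mem₀ : L₀.Relations 2 := MemRel.mem

/-- The membership symbol of `L'`. -/
def mem' : L'.Relations 2 := MemRel.mem

/-- The symbol `br` of `L'`. -/
def brS : L'.Functions 1 := BrFun.br

section Axioms

variable {L : Language} (m : L.Relations 2)

/-- `t ∈' u` as a bounded formula. -/
def memB {k : ℕ} (t u : L.Term (Empty ⊕ Fin k)) : L.BoundedFormula Empty k :=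
  m.boundedFormula₂ t u

/-- A de Bruijn variable with explicit bound. -/
def v {L : Language} (k : ℕ) {N : ℕ} (h : k < N) : L.Term (Empty ⊕ Fin N) :=
  Term.var (Sum.inr ⟨k, h⟩)

/-- Extensionality: `∀x∀y((∀z(z ∈ x ↔ z ∈ y)) → x = y)`. -/
def extAx : L.Sentence :=
  ∀' ∀' ((∀' (memB m &2 &0 ⇔ memB m &2 &1)) ⟹ Term.bdEqual (&0) &1)

/-- Empty set: `∃e∀z(z ∉ e)`. -/
def emptyAx : L.Sentence := ∃' ∀' ∼(memB m &1 &0)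

/-- Pairing: `∀a∀b∃p∀z(z ∈ p ↔ (z = a ∨ z = b))`. -/
def pairAx : L.Sentence :=
  ∀' ∀' ∃' ∀' (memB m &3 &2 ⇔ (Term.bdEqual (&3) &0 ⊔ Term.bdEqual (&3) &1))

/-- Union: `∀x∃u∀z(z ∈ u ↔ ∃w(w ∈ x ∧ z ∈ w))`. -/
def unionAx : L.Sentence :=
  ∀' ∃' ∀' (memB m &2 &1 ⇔ ∃' (memB m &3 &0 ⊓ memB m &2 &3))

/-- Power set: `∀x∃P∀z(z ∈ P ↔ ∀w(w ∈ z → w ∈ x))`. -/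
def powerAx : L.Sentence :=
  ∀' ∃' ∀' (memB m &2 &1 ⇔ ∀' (memB m &3 &2 ⟹ memB m &3 &0))

/-- Infinity: `∃x((∃e(e ∈ x ∧ ∀z(z ∉ e))) ∧ ∀y(y ∈ x → ∃s(s ∈ x ∧ ∀w(w ∈ s ↔ (w ∈ y ∨ w = y)))))`. -/
def infAx : L.Sentence :=
  ∃' ((∃' (memB m &1 &0 ⊓ ∀' ∼(memB m &2 &1))) ⊓
    (∀' (memB m &1 &0 ⟹
      ∃' (memB m &2 &0 ⊓ ∀' (memB m &3 &2 ⇔ (memB m &3 &1 ⊔ Term.bdEqual (&3) &1))))))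

/-- Foundation: `∀x(∃a(a ∈ x) → ∃y(y ∈ x ∧ ∀z(z ∈ y → z ∉ x)))`. -/
def foundAx : L.Sentence :=
  ∀' ((∃' (memB m &1 &0)) ⟹ ∃' (memB m &1 &0 ⊓ ∀' (memB m &2 &1 ⟹ ∼(memB m &2 &0))))

/-- The separation axiom for a formula `φ` with free variables `v₀, …, vₙ₋₁` (parameters)
and `vₙ` (the separated variable): the universal closure of
`∀x∃y∀z(z ∈ y ↔ (z ∈ x ∧ φ(params, z)))`. -/
def sepAx (n : ℕ) (φ : L.BoundedFormula Empty (n + 1)) : L.Sentence :=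
  ((∀' ∃' ∀' (memB m (v (n + 2) (by omega)) (v (n + 1) (by omega)) ⇔
      (memB m (v (n + 2) (by omega)) (v n (by omega)) ⊓ φ.liftAt 2 n)) :
    L.BoundedFormula Empty n)).alls

/-- The replacement axiom for a formula `φ` with free variables `v₀, …, vₙ₋₁` (parameters),
`vₙ` (input) and `vₙ₊₁` (output): the universal closure of
`∀x((∀a(a ∈ x → ∃b(φ(a,b) ∧ ∀b'(φ(a,b') → b' = b)))) →
  ∃y∀b(b ∈ y ↔ ∃a∃b''(b'' = b ∧ a ∈ x ∧ φ(a,b''))))`. -/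
def replAx (n : ℕ) (φ : L.BoundedFormula Empty (n + 2)) : L.Sentence :=
  ((∀' ((∀' (memB m (v (n + 1) (by omega)) (v n (by omega)) ⟹
        ∃' (φ.liftAt 1 n ⊓
          ∀' ((φ.liftAt 1 n).liftAt 1 (n + 2) ⟹
            Term.bdEqual (v (n + 3) (by omega)) (v (n + 2) (by omega)))))) ⟹
      ∃' ∀' (memB m (v (n + 2) (by omega)) (v (n + 1) (by omega)) ⇔
        ∃' ∃' (Term.bdEqual (v (n + 4) (by omega)) (v (n + 2) (by omega)) ⊓
          (memB m (v (n + 3) (by omega)) (v n (by omega)) ⊓ φ.liftAt 3 n)))) :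
    L.BoundedFormula Empty n)).alls

/-- The seven non-scheme axioms of ZF over a language with membership relation `m`. -/
def coreAxioms : Set L.Sentence :=
  {extAx m, emptyAx m, pairAx m, unionAx m, powerAx m, infAx m, foundAx m}

end Axioms

/-- The `L₀`-theory ZF: extensionality, empty set, pairing, union, power set, infinity,
foundation, and the separation and replacement schemes over all `L₀`-formulas. -/
def ZF : L₀.Theory :=
  coreAxioms mem₀ ∪ (⋃ n : ℕ, Set.range (sepAx mem₀ n)) ∪
    (⋃ n : ℕ, Set.range (replAx mem₀ n))

/-- The Reduction Axiom restricted to `L'`: `∀x (br x = x)`. -/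
def reductionAx : L'.Sentence := ∀' Term.bdEqual (Functions.apply₁ brS &0) &0

/-- The `L'`-theory `T`: the images under `incl` of the seven non-scheme ZF axioms,
the separation and replacement schemes over all `L'`-formulas, and the Reduction Axiom. -/
def T : L'.Theory :=
  incl.onSentence '' coreAxioms mem₀ ∪ (⋃ n : ℕ, Set.range (sepAx mem' n)) ∪
    (⋃ n : ℕ, Set.range (replAx mem' n)) ∪ {reductionAx}

open BoundedFormula Structure

section SchemeCongr

variable {L₁ L₂ : Language} {M : Type*} [L₁.Structure M] [L₂.Structure M]
  {m₁ : L₁.Relations 2} {m₂ : L₂.Relations 2}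

theorem realize_sepAx_congr (hm : ∀ a b : M, RelMap m₁ ![a, b] ↔ RelMap m₂ ![a, b]) {n : ℕ}
    {φ₁ : L₁.BoundedFormula Empty (n + 1)} {φ₂ : L₂.BoundedFormula Empty (n + 1)}
    (hφ : ∀ xs, φ₁.Realize (default : Empty → M) xs ↔ φ₂.Realize default xs) :
    M ⊨ sepAx m₁ n φ₁ ↔ M ⊨ sepAx m₂ n φ₂ := by
  simp only [sepAx, memB, v, Term.realize_var, Sentence.Realize, realize_alls, realize_all,
    realize_ex, realize_iff, realize_inf, realize_rel₂, realize_liftAt (show n ≤ n + 1 by omega),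
    hm, hφ]

theorem realize_replAx_congr (hm : ∀ a b : M, RelMap m₁ ![a, b] ↔ RelMap m₂ ![a, b]) {n : ℕ}
    {φ₁ : L₁.BoundedFormula Empty (n + 2)} {φ₂ : L₂.BoundedFormula Empty (n + 2)}
    (hφ : ∀ xs, φ₁.Realize (default : Empty → M) xs ↔ φ₂.Realize default xs) :
    M ⊨ replAx m₁ n φ₁ ↔ M ⊨ replAx m₂ n φ₂ := by
  simp only [replAx, memB, v, Term.realize_var, Sentence.Realize, realize_alls, realize_all,
    realize_ex, realize_iff, realize_imp, realize_inf, realize_rel₂, realize_bdEqual,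
    realize_liftAt (show n ≤ n + 2 by omega), realize_liftAt (show n + 2 ≤ n + 3 by omega),
    hm, hφ]

end SchemeCongr

theorem model_iUnion_range_iff {L : Language} {M : Type*} [L.Structure M] {ι : Type*}
    {κ : ι → Type*} (f : ∀ i, κ i → L.Sentence) :
    M ⊨ (⋃ i, Set.range (f i)) ↔ ∀ i k, M ⊨ f i k := by
  simp only [Theory.model_iff, Set.mem_iUnion, Set.mem_range]
  exact ⟨fun h i k => h _ ⟨i, k, rfl⟩, by rintro h _ ⟨i, k, rfl⟩; exact h i k⟩

theorem model_ZF_iff (M : Type*) [L₀.Structure M] :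
    M ⊨ ZF ↔ M ⊨ coreAxioms mem₀ ∧ (∀ n φ, M ⊨ sepAx mem₀ n φ) ∧
      ∀ n φ, M ⊨ replAx mem₀ n φ := by
  simp only [ZF, Theory.model_union_iff, model_iUnion_range_iff, and_assoc]

theorem model_T_iff (M : Type*) [L'.Structure M] :
    M ⊨ T ↔ M ⊨ incl.onTheory (coreAxioms mem₀) ∧ (∀ n φ, M ⊨ sepAx mem' n φ) ∧
      (∀ n φ, M ⊨ replAx mem' n φ) ∧ M ⊨ reductionAx := by
  simp only [T, LHom.onTheory, Theory.model_union_iff, model_iUnion_range_iff,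
    Theory.model_singleton_iff, and_assoc]

theorem realize_reductionAx (M : Type*) [L'.Structure M] :
    M ⊨ reductionAx ↔ ∀ x : M, funMap brS ![x] = x := by
  simp only [reductionAx, Sentence.Realize, Formula.Realize, realize_all, realize_bdEqual,
    Term.realize_functions_apply₁]
  rfl

def eraseBrTerm {α : Type*} : L'.Term α → L₀.Term α
  | Term.var a => Term.var a
  | Term.func BrFun.br ts => eraseBrTerm (ts 0)

def eraseBr {n : ℕ} : L'.BoundedFormula Empty n → L₀.BoundedFormula Empty n :=
  mapTermRel (fun _ t => eraseBrTerm t) (fun _ r => r) (fun _ => id)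

section Expansion

variable {M : Type*} [L₀.Structure M] [L'.Structure M]

theorem realize_eraseBrTerm (hbr : M ⊨ reductionAx) {α : Type*} (t : L'.Term α) (v : α → M) :
    (eraseBrTerm t).realize v = t.realize v := by
  induction t with
  | var a => rfl
  | func f ts ih =>
    cases f
    rw [eraseBrTerm, ih]
    exact ((realize_reductionAx M).1 hbr _).symm.trans
      (congrArg (funMap brS) (funext fun i => by fin_cases i; rfl))

variable [incl.IsExpansionOn M]

theorem realize_eraseBr (hbr : M ⊨ reductionAx) {n : ℕ} (φ : L'.BoundedFormula Empty n)
    (xs : Fin n → M) : (eraseBr φ).Realize default xs ↔ φ.Realize default xs :=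
  realize_mapTermRel_id (fun _ t _ => realize_eraseBrTerm hbr t _)
    (fun _ r _ => (incl.map_onRelation r _).symm)

theorem relMap_mem₀_iff_mem' (a b : M) : RelMap mem₀ ![a, b] ↔ RelMap mem' ![a, b] :=
  Iff.of_eq (incl.map_onRelation mem₀ ![a, b]).symm

variable (M) in
theorem model_T_iff_model_ZF : M ⊨ T ↔ M ⊨ ZF ∧ M ⊨ reductionAx := by
  rw [model_T_iff, model_ZF_iff, LHom.onTheory_model]
  constructor
  · rintro ⟨hcore, hsep, hrepl, hbr⟩
    refine ⟨⟨hcore, fun n φ => ?_, fun n φ => ?_⟩, hbr⟩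
    · exact (realize_sepAx_congr relMap_mem₀_iff_mem'
        fun xs => (incl.realize_onBoundedFormula φ).symm).2 (hsep n _)
    · exact (realize_replAx_congr relMap_mem₀_iff_mem'
        fun xs => (incl.realize_onBoundedFormula φ).symm).2 (hrepl n _)
  · rintro ⟨⟨hcore, hsep, hrepl⟩, hbr⟩
    refine ⟨hcore, fun n φ => ?_, fun n φ => ?_, hbr⟩
    · exact (realize_sepAx_congr relMap_mem₀_iff_mem' (realize_eraseBr hbr φ)).1 (hsep n _)
    · exact (realize_replAx_congr relMap_mem₀_iff_mem' (realize_eraseBr hbr φ)).1 (hrepl n _)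

end Expansion

@[reducible]
def brIdExpansion (M : Type*) [L₀.Structure M] : L'.Structure M where
  funMap := fun | BrFun.br, x => x 0
  RelMap := fun r x => RelMap (L := L₀) r x

theorem isExpansionOn_brIdExpansion (M : Type*) [L₀.Structure M] :
    @LHom.IsExpansionOn L₀ L' incl M _ (brIdExpansion M) :=
  letI := brIdExpansion M
  ⟨fun f => Empty.elim f, fun _ _ => rfl⟩

/-- `T` is a conservative extension of ZF: for every `L₀`-sentence `φ`,
`T ⊨ φ'` iff `ZF ⊨ φ`, where `φ'` is the image of `φ` under the inclusion `L₀ ↪ L'`. -/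
theorem T_conservative_over_ZF (φ : L₀.Sentence) :
    (∀ (M : Type u) [L'.Structure M] [Nonempty M], M ⊨ T → M ⊨ incl.onSentence φ) ↔
      (∀ (M : Type u) [L₀.Structure M] [Nonempty M], M ⊨ ZF → M ⊨ φ) := by
  constructor
  · intro hT M _ _ hZF
    let := brIdExpansion M
    have := isExpansionOn_brIdExpansion M
    have hMT : M ⊨ T := (model_T_iff_model_ZF M).2 ⟨hZF, (realize_reductionAx M).2 fun _ => rfl⟩
    exact (incl.realize_onSentence M φ).1 (hT M hMT)
  · intro hZF M _ _ hT
    let := incl.reduct M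
    exact (incl.realize_onSentence M φ).2 (hZF M ((model_T_iff_model_ZF M).1 hT).1)

end SMTPaper
end

section
/- For every L₀-structure M that is a model of ZF, the L'-structure on the same carrier that interprets ∈' as in M and interprets br as the identity function is a model of T. -/
/-!
Since `br` is interpreted as the identity, an `L'`-term denotes the same element as the variable
it is built on. Replacing `br` by that variable therefore translates every `L'`-formula into an
`L₀`-formula with the same meaning in `M`, and the translation sends each separation and
replacement instance of `T` to a separation and replacement instance of ZF. The remaining axioms
of `T` are ZF axioms read in an expansion of `M`, and the Reduction Axiom holds by construction.
-/

open FirstOrder FirstOrder.Language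

universe u

namespace SMTPaper

/-- The `L'`-structure on the carrier of an `L₀`-structure `M` that interprets the
membership relation as in `M` and interprets `br` as the identity function. -/
def extendStr (M : Type u) [S : L₀.Structure M] : L'.Structure M where
  funMap := fun {n} f xs =>
    match n, f with
    | 1, BrFun.br => xs 0
  RelMap := fun {n} r xs => Structure.RelMap (L := L₀) (M := M) r xs

end SMTPaper

namespace FirstOrder.Language

variable {L L₂ : Language} {α β : Type*}

namespace Term

theorem relabel_subst (s : L.Term α) (σ : α → L.Term β) {γ : Type*} (g : β → γ) :
    (s.subst σ).relabel g = s.subst fun a => (σ a).relabel g := by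
  induction s with
  | var => rfl
  | func f ts ih => simp only [subst, relabel, ih]

theorem substFunc_relabel (c : ∀ {n}, L.Functions n → L₂.Term (Fin n)) (g : α → β)
    (t : L.Term α) : (t.relabel g).substFunc c = (t.substFunc c).relabel g := by
  induction t with
  | var => rfl
  | func f ts ih => simp only [relabel, substFunc, relabel_subst, ih]

end Term

namespace BoundedFormula

variable (c : ∀ {n}, L.Functions n → L₂.Term (Fin n)) (r : ∀ {n}, L.Relations n → L₂.Relations n)

/-- The formula-level analogue of `Term.substFunc`, which also renames relation symbols by `r`. -/
def substFunc {n : ℕ} (φ : L.BoundedFormula α n) : L₂.BoundedFormula α n :=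
  φ.mapTermRel (fun _ t => t.substFunc c) (fun _ => r) fun _ => id

variable {n : ℕ} (φ ψ : L.BoundedFormula α n)

@[simp] theorem substFunc_imp :
    (φ.imp ψ).substFunc c r = (φ.substFunc c r).imp (ψ.substFunc c r) := rfl

@[simp] theorem substFunc_inf : (φ ⊓ ψ).substFunc c r = φ.substFunc c r ⊓ ψ.substFunc c r := rfl

@[simp] theorem substFunc_iff :
    (φ.iff ψ).substFunc c r = (φ.substFunc c r).iff (ψ.substFunc c r) := rfl

@[simp] theorem substFunc_all (φ : L.BoundedFormula α (n + 1)) :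
    (∀' φ).substFunc c r = ∀' φ.substFunc c r := rfl

@[simp] theorem substFunc_ex (φ : L.BoundedFormula α (n + 1)) :
    (∃' φ).substFunc c r = ∃' φ.substFunc c r := rfl

@[simp] theorem substFunc_equal (t u : L.Term (α ⊕ Fin n)) :
    (Term.bdEqual t u).substFunc c r = Term.bdEqual (t.substFunc c) (u.substFunc c) := rfl

@[simp] theorem substFunc_rel {k : ℕ} (R : L.Relations k) (ts : Fin k → L.Term (α ⊕ Fin n)) :
    (R.boundedFormula ts).substFunc c r = (r R).boundedFormula fun i => (ts i).substFunc c := rfl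

theorem substFunc_castLE {m n : ℕ} (h : m ≤ n) (φ : L.BoundedFormula α m) :
    (φ.castLE h).substFunc c r = (φ.substFunc c r).castLE h := by
  induction φ generalizing n with
  | falsum => rfl
  | equal t u => simp [castLE, substFunc, mapTermRel, Term.substFunc_relabel]
  | rel R ts => simp [castLE, substFunc, mapTermRel, Term.substFunc_relabel]; rfl
  | imp φ ψ ihφ ihψ => simp [castLE, ihφ, ihψ]
  | all φ ih => simp [castLE, ih]

theorem substFunc_liftAt (n' m : ℕ) :
    (φ.liftAt n' m).substFunc c r = (φ.substFunc c r).liftAt n' m := by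
  induction φ with
  | falsum => rfl
  | equal t u => simp [liftAt, substFunc, mapTermRel, Term.liftAt, Term.substFunc_relabel]
  | rel R ts => simp [liftAt, substFunc, mapTermRel, Term.liftAt, Term.substFunc_relabel]
  | imp φ ψ ihφ ihψ => exact congrArg₂ imp ihφ ihψ
  | all φ ih => exact congrArg all ((substFunc_castLE c r _ _).trans (congrArg _ ih))

theorem substFunc_alls :
    ∀ {n} (φ : L.BoundedFormula α n), φ.alls.substFunc c r = (φ.substFunc c r).alls
  | 0, _ => rfl
  | _ + 1, φ => substFunc_alls φ.all

theorem realize_substFunc {M : Type*} [L.Structure M] [L₂.Structure M]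
    (hc : ∀ {k} (f : L.Functions k) (xs : Fin k → M), (c f).realize xs = Structure.funMap f xs)
    (hr : ∀ {k} (R : L.Relations k) (xs : Fin k → M),
      Structure.RelMap (r R) xs = Structure.RelMap R xs)
    {v : α → M} {xs : Fin n → M} : (φ.substFunc c r).Realize v xs ↔ φ.Realize v xs :=
  realize_mapTermRel_id (fun _ t _ => t.realize_substFunc (fun f y => (hc f y).symm) _)
    fun _ => hr

end BoundedFormula

end FirstOrder.Language

namespace SMTPaper

open BoundedFormula

section Translation

variable {L L₂ : Language} (c : ∀ {n}, L.Functions n → L₂.Term (Fin n))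
  (r : ∀ {n}, L.Relations n → L₂.Relations n) (m : L.Relations 2)

@[simp] theorem substFunc_memB {k : ℕ} (t u : L.Term (Empty ⊕ Fin k)) :
    (memB m t u).substFunc c r = memB (r m) (t.substFunc c) (u.substFunc c) := by
  simp only [memB, Relations.boundedFormula₂, substFunc_rel]
  congr 1
  funext i
  fin_cases i <;> rfl

@[simp] theorem substFunc_v {k N : ℕ} (h : k < N) : (v (L := L) k h).substFunc c = v k h := rfl

theorem substFunc_sepAx (n : ℕ) (φ : L.BoundedFormula Empty (n + 1)) :
    (sepAx m n φ).substFunc c r = sepAx (r m) n (φ.substFunc c r) := by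
  simp [sepAx, substFunc_alls, substFunc_liftAt]

theorem substFunc_replAx (n : ℕ) (φ : L.BoundedFormula Empty (n + 2)) :
    (replAx m n φ).substFunc c r = replAx (r m) n (φ.substFunc c r) := by
  simp [replAx, substFunc_alls, substFunc_liftAt]

end Translation

def brAsVar : ∀ {n}, L'.Functions n → L₀.Term (Fin n)
  | _, BrFun.br => Term.var 0

def memAsMem₀ : ∀ {n}, L'.Relations n → L₀.Relations n
  | _, MemRel.mem => mem₀

section ExtendStr

attribute [local instance] extendStr

instance incl_isExpansionOn_extendStr (M : Type u) [L₀.Structure M] : incl.IsExpansionOn M :=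
  ⟨fun f => f.elim, fun _ _ => rfl⟩

theorem extendStr_realize_iff_substFunc_brAsVar (M : Type u) [L₀.Structure M]
    (σ : L'.Sentence) :
    M ⊨ σ ↔ M ⊨ σ.substFunc brAsVar memAsMem₀ :=
  (realize_substFunc brAsVar memAsMem₀ σ (fun | BrFun.br, _ => rfl) fun | MemRel.mem, _ => rfl).symm

theorem extendStr_model_T_general (M : Type u) [L₀.Structure M] (h : M ⊨ ZF) :
    @Theory.Model L' M (extendStr M) T := by
  refine ⟨?_⟩
  rintro σ (((⟨ψ, hψ, rfl⟩ | hsep) | hrepl) | rfl)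
  · rw [LHom.realize_onSentence]
    exact h.realize_of_mem ψ (.inl (.inl hψ))
  · obtain ⟨n, φ, rfl⟩ := Set.mem_iUnion.1 hsep
    rw [extendStr_realize_iff_substFunc_brAsVar, substFunc_sepAx]
    exact h.realize_of_mem _ (.inl (.inr (Set.mem_iUnion.2 ⟨n, _, rfl⟩)))
  · obtain ⟨n, φ, rfl⟩ := Set.mem_iUnion.1 hrepl
    rw [extendStr_realize_iff_substFunc_brAsVar, substFunc_replAx]
    exact h.realize_of_mem _ (.inr (Set.mem_iUnion.2 ⟨n, _, rfl⟩))
  · exact fun _ => rfl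

/-- For every `L₀`-structure `M` that is a model of ZF, the `L'`-structure
on the same carrier interpreting membership as in `M` and `br` as the identity is a model
of `T`. -/
theorem extendStr_model_T (M : Type u) [L₀.Structure M] [Nonempty M] (h : M ⊨ ZF) :
    @Theory.Model L' M (extendStr M) T :=
  extendStr_model_T_general M h

end ExtendStr

end SMTPaper
end

section
/- In every SMT-structure satisfying (Empty), (Pair) and (NotSet), there exist sets x and y with x ≠ y such that no set is an element of x and no set is an element of y. Consequently the ZF theorem 'there is exactly one set having no sets as elements' fails in SMT, so SMT is not an extension of ZF. -/
/-!
The empty set `e` has no elements at all, and the 1×2 matrix `u = [e e]` is not a set, so the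
singleton `{u}` (the pair `{u, u}`) is a second set without set elements; it differs from `e`
because it has an element.
-/

lemma not_isSet_mat_const {V : Type*} (IsSet : V → Prop)
    (mat : ∀ m n : ℕ, (Fin m → Fin n → V) → V)
    (hNotSet : ∀ (m n : ℕ) (A : Fin m → Fin n → V), 2 ≤ m * n →
      (∀ i j, IsSet (A i j)) → ¬ IsSet (mat m n A))
    {s : V} (hs : IsSet s) : ¬ IsSet (mat 1 2 fun _ _ => s) :=
  hNotSet 1 2 _ (by norm_num) fun _ _ => hs

theorem two_sets_without_set_elements {V : Type*} (mem : V → V → Prop) (IsSet : V → Prop)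
    (mat : ∀ m n : ℕ, (Fin m → Fin n → V) → V)
    (hEmpty : ∃ e, IsSet e ∧ ∀ α, ¬ mem α e)
    (hPair : ∀ α β, ∃ p, IsSet p ∧ ∀ γ, mem γ p ↔ γ = α ∨ γ = β)
    (hNotSet : ∀ (m n : ℕ) (A : Fin m → Fin n → V), 2 ≤ m * n →
      (∀ i j, IsSet (A i j)) → ¬ IsSet (mat m n A)) :
    ∃ x y, IsSet x ∧ IsSet y ∧ x ≠ y ∧
      (∀ z, IsSet z → ¬ mem z x) ∧ (∀ z, IsSet z → ¬ mem z y) := by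
  obtain ⟨e, he, he_empty⟩ := hEmpty
  set u := mat 1 2 fun _ _ => e
  have hu : ¬ IsSet u := not_isSet_mat_const IsSet mat hNotSet he
  obtain ⟨p, hp, hp_mem⟩ := hPair u u
  have hu_mem : mem u p := (hp_mem u).2 (Or.inl rfl)
  refine ⟨e, p, he, hp, ?_, fun z _ => he_empty z, fun z hz hzp => ?_⟩
  · rintro rfl
    exact he_empty u hu_mem
  · obtain rfl | rfl := (hp_mem z).1 hzp <;> exact hu hz
end

section
/- In every SMT-structure satisfying (ExtSet), (Empty), (Pair), (Sum), (Sep), (Inf) and (NotSet), there exist sets w₁ and w₂ with w₁ ≠ w₂ such that for each i: e ∈ wᵢ, where e is the unique set with no elements, and for every set y with y ∈ wᵢ, the unique set s with ∀γ (γ ∈ s ↔ γ = y) satisfies s ∈ wᵢ. That is, more than one set satisfies the Generalized Axiom of Countable Infinity. -/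
/-!
Restricting an infinity witness `w` to its sets gives an inductive set `a`. The axiom (NotSet)
provides a non-set `ν` (the `1 × 2` matrix with empty entries); adjoining it to `a` cannot
break closure under `y ↦ {y}`, which only concerns sets `y`, so `a ∪ {ν}` is a second
inductive set, different from `a` because every element of `a` is a set.
-/

section

variable {V : Type*} (mem : V → V → Prop) (IsSet : V → Prop)

def IsInductive (w : V) : Prop :=
  (∀ e, IsSet e → (∀ α, ¬ mem α e) → mem e w) ∧
    ∀ y, IsSet y → mem y w → ∀ s, IsSet s → (∀ γ, mem γ s ↔ γ = y) → mem s w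

variable {mem IsSet}

theorem isInductive_of_exists_singleton_mem
    (hExtSet : ∀ x y, IsSet x → IsSet y → (∀ α, mem α x ↔ mem α y) → x = y) {w : V}
    (hEmpty : ∀ e, IsSet e → (∀ α, ¬ mem α e) → mem e w)
    (hSucc : ∀ y, IsSet y → mem y w → ∃ s, IsSet s ∧ mem s w ∧ ∀ γ, mem γ s ↔ γ = y) :
    IsInductive mem IsSet w := by
  refine ⟨hEmpty, fun y hy hyw s hs hsy => ?_⟩
  obtain ⟨s', hs', hs'w, hs'y⟩ := hSucc y hy hyw
  obtain rfl : s = s' := hExtSet s s' hs hs' fun γ => (hsy γ).trans (hs'y γ).symm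
  exact hs'w

theorem IsInductive.of_mem_iff_mem_and_isSet {w a : V} (hw : IsInductive mem IsSet w)
    (ha : ∀ α, mem α a ↔ mem α w ∧ IsSet α) : IsInductive mem IsSet a :=
  ⟨fun e he heE => (ha e).2 ⟨hw.1 e he heE, he⟩,
    fun y hy hya s hs hsy => (ha s).2 ⟨hw.2 y hy ((ha y).1 hya).1 s hs hsy, hs⟩⟩

theorem IsInductive.of_mem_iff_mem_or_eq_not_isSet {a b ν : V} (ha : IsInductive mem IsSet a)
    (hν : ¬ IsSet ν) (hb : ∀ β, mem β b ↔ mem β a ∨ β = ν) : IsInductive mem IsSet b := by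
  refine ⟨fun e he heE => (hb e).2 (.inl (ha.1 e he heE)), fun y hy hyb s hs hsy => ?_⟩
  rcases (hb y).1 hyb with hya | rfl
  · exact (hb s).2 (.inl (ha.2 y hy hya s hs hsy))
  · exact absurd hy hν

theorem exists_mem_iff_mem_or_eq
    (hPair : ∀ α β, ∃ p, IsSet p ∧ ∀ γ, mem γ p ↔ γ = α ∨ γ = β)
    (hSum : ∀ x, IsSet x → (∀ α, mem α x → IsSet α) →
      ∃ u, IsSet u ∧ ∀ β, mem β u ↔ ∃ z, mem z x ∧ mem β z)
    {x : V} (hx : IsSet x) (α : V) : ∃ u, IsSet u ∧ ∀ β, mem β u ↔ mem β x ∨ β = α := by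
  obtain ⟨p, hp, hpα⟩ := hPair α α
  obtain ⟨q, hq, hqxp⟩ := hPair x p
  have hqSets : ∀ z, mem z q → IsSet z := fun z hz => by
    rcases (hqxp z).1 hz with rfl | rfl <;> assumption
  obtain ⟨u, hu, huq⟩ := hSum q hq hqSets
  refine ⟨u, hu, fun β => (huq β).trans ⟨?_, ?_⟩⟩
  · rintro ⟨z, hzq, hβz⟩
    rcases (hqxp z).1 hzq with rfl | rfl
    · exact .inl hβz
    · exact .inr (((hpα β).1 hβz).elim id id)
  · rintro (hβx | rfl)
    · exact ⟨x, (hqxp x).2 (.inl rfl), hβx⟩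
    · exact ⟨p, (hqxp p).2 (.inr rfl), (hpα β).2 (.inl rfl)⟩

end

theorem two_infinity_witnesses {V : Type*} (mem : V → V → Prop) (IsSet : V → Prop)
    (mat : ∀ m n : ℕ, (Fin m → Fin n → V) → V)
    (hExtSet : ∀ x y, IsSet x → IsSet y → (∀ α, mem α x ↔ mem α y) → x = y)
    (hEmpty : ∃ e, IsSet e ∧ ∀ α, ¬ mem α e)
    (hPair : ∀ α β, ∃ p, IsSet p ∧ ∀ γ, mem γ p ↔ γ = α ∨ γ = β)
    (hSum : ∀ x, IsSet x → (∀ α, mem α x → IsSet α) →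
      ∃ u, IsSet u ∧ ∀ β, mem β u ↔ ∃ z, mem z x ∧ mem β z)
    (hSep : ∀ x, IsSet x → ∀ Φ : V → Prop,
      ∃ y, IsSet y ∧ ∀ α, mem α y ↔ mem α x ∧ Φ α)
    (hInf : ∃ w, IsSet w ∧ (∀ e, IsSet e → (∀ α, ¬ mem α e) → mem e w) ∧
      ∀ y, IsSet y → mem y w → ∃ s, IsSet s ∧ mem s w ∧ ∀ γ, mem γ s ↔ γ = y)
    (hNotSet : ∀ (m n : ℕ) (A : Fin m → Fin n → V), 2 ≤ m * n →
      (∀ i j, IsSet (A i j)) → ¬ IsSet (mat m n A)) :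
    ∃ w₁ w₂, IsSet w₁ ∧ IsSet w₂ ∧ w₁ ≠ w₂ ∧
      ((∀ e, IsSet e → (∀ α, ¬ mem α e) → mem e w₁) ∧
        ∀ y, IsSet y → mem y w₁ →
          ∀ s, IsSet s → (∀ γ, mem γ s ↔ γ = y) → mem s w₁) ∧
      ((∀ e, IsSet e → (∀ α, ¬ mem α e) → mem e w₂) ∧
        ∀ y, IsSet y → mem y w₂ →
          ∀ s, IsSet s → (∀ γ, mem γ s ↔ γ = y) → mem s w₂) := by
  obtain ⟨e, he, -⟩ := hEmpty
  have hν : ¬ IsSet (mat 1 2 fun _ _ => e) := hNotSet 1 2 _ (by norm_num) fun _ _ => he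
  obtain ⟨w, hw, hwEmpty, hwSucc⟩ := hInf
  obtain ⟨a, ha, haw⟩ := hSep w hw IsSet
  obtain ⟨b, hb, hba⟩ := exists_mem_iff_mem_or_eq hPair hSum ha (mat 1 2 fun _ _ => e)
  have haInd : IsInductive mem IsSet a :=
    (isInductive_of_exists_singleton_mem hExtSet hwEmpty hwSucc).of_mem_iff_mem_and_isSet haw
  have hab : a ≠ b := by
    rintro rfl
    exact hν ((haw _).1 ((hba _).2 (.inr rfl))).2
  exact ⟨a, b, ha, hb, hab, haInd, haInd.of_mem_iff_mem_or_eq_not_isSet hν hba⟩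
end

section
/- In every SMT-structure satisfying (ExtSet), (Pair), (Sum), (SetOfMat) and (Sep), for all sets x and y there is exactly one set p such that for every α, α ∈ p ↔ there exist β and γ with β ∈ x, γ ∈ y and α = mat 1 2 (β, γ), the 1×2 matrix with entries β and γ. (Existence and uniqueness of the Cartesian product x × y in SMT.) -/
/-!
The product `x × y` is cut out by Separation from the set of all `1 × 2` matrices over a set
containing both `x` and `y` (obtained from Pair and Sum); uniqueness is extensionality.
-/

namespace SMT

variable {V : Type*} (mem : V → V → Prop) (IsSet : V → Prop)

theorem existsUnique_of_exists_set_iff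
    (hExtSet : ∀ x y, IsSet x → IsSet y → (∀ α, mem α x ↔ mem α y) → x = y)
    {Φ : V → Prop} (h : ∃ p, IsSet p ∧ ∀ α, mem α p ↔ Φ α) :
    ∃! p, IsSet p ∧ ∀ α, mem α p ↔ Φ α := by
  obtain ⟨p, hp, hpΦ⟩ := h
  exact ⟨p, ⟨hp, hpΦ⟩, fun q ⟨hq, hqΦ⟩ =>
    hExtSet q p hq hp fun α => (hqΦ α).trans (hpΦ α).symm⟩

theorem exists_set_iff_of_subset
    (hSep : ∀ x, IsSet x → ∀ Φ : V → Prop, ∃ y, IsSet y ∧ ∀ α, mem α y ↔ mem α x ∧ Φ α)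
    {Φ : V → Prop} {s : V} (hs : IsSet s) (hΦs : ∀ α, Φ α → mem α s) :
    ∃ p, IsSet p ∧ ∀ α, mem α p ↔ Φ α := by
  obtain ⟨p, hp, hpmem⟩ := hSep s hs Φ
  exact ⟨p, hp, fun α => (hpmem α).trans ⟨And.right, fun hα => ⟨hΦs α hα, hα⟩⟩⟩

theorem exists_set_superset_union
    (hPair : ∀ α β, ∃ p, IsSet p ∧ ∀ γ, mem γ p ↔ γ = α ∨ γ = β)
    (hSum : ∀ x, IsSet x → (∀ α, mem α x → IsSet α) →
      ∃ u, IsSet u ∧ ∀ β, mem β u ↔ ∃ z, mem z x ∧ mem β z)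
    {x y : V} (hx : IsSet x) (hy : IsSet y) :
    ∃ u, IsSet u ∧ (∀ β, mem β x → mem β u) ∧ (∀ γ, mem γ y → mem γ u) := by
  obtain ⟨q, hq, hqmem⟩ := hPair x y
  have hq_sets : ∀ z, mem z q → IsSet z := fun z hz => by
    rcases (hqmem z).1 hz with rfl | rfl <;> assumption
  obtain ⟨u, hu, humem⟩ := hSum q hq hq_sets
  exact ⟨u, hu, fun β hβ => (humem β).2 ⟨x, (hqmem x).2 (.inl rfl), hβ⟩,
    fun γ hγ => (humem γ).2 ⟨y, (hqmem y).2 (.inr rfl), hγ⟩⟩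

end SMT

theorem cartesianProduct_exists_unique {V : Type*} (mem : V → V → Prop) (IsSet : V → Prop)
    (mat : ∀ m n : ℕ, (Fin m → Fin n → V) → V)
    (hExtSet : ∀ x y, IsSet x → IsSet y → (∀ α, mem α x ↔ mem α y) → x = y)
    (hPair : ∀ α β, ∃ p, IsSet p ∧ ∀ γ, mem γ p ↔ γ = α ∨ γ = β)
    (hSum : ∀ x, IsSet x → (∀ α, mem α x → IsSet α) →
      ∃ u, IsSet u ∧ ∀ β, mem β u ↔ ∃ z, mem z x ∧ mem β z)
    (hSetOfMat : ∀ x, IsSet x → ∀ m n : ℕ, 0 < m → 0 < n →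
      ∃ M, IsSet M ∧ ∀ β, mem β M ↔
        ∃ A : Fin m → Fin n → V, (∀ i j, mem (A i j) x) ∧ β = mat m n A)
    (hSep : ∀ x, IsSet x → ∀ Φ : V → Prop,
      ∃ y, IsSet y ∧ ∀ α, mem α y ↔ mem α x ∧ Φ α) :
    ∀ x y, IsSet x → IsSet y →
      ∃! p, IsSet p ∧ ∀ α, mem α p ↔
        ∃ β γ, mem β x ∧ mem γ y ∧ α = mat 1 2 ![![β, γ]] := by
  intro x y hx hy
  obtain ⟨u, hu, hxu, hyu⟩ := SMT.exists_set_superset_union mem IsSet hPair hSum hx hy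
  obtain ⟨M, hM, hMmem⟩ := hSetOfMat u hu 1 2 one_pos two_pos
  refine SMT.existsUnique_of_exists_set_iff mem IsSet hExtSet
    (SMT.exists_set_iff_of_subset mem IsSet hSep hM ?_)
  rintro _ ⟨β, γ, hβ, hγ, rfl⟩
  refine (hMmem _).2 ⟨_, fun i j => ?_, rfl⟩
  fin_cases i; fin_cases j
  exacts [hxu β hβ, hyu γ hγ]
end

section
/- In every SMT-structure satisfying (ExtSet), (Pair), (Sum), (SetOfMat), (Sep) and (Pow), for all sets x and y there is a set F such that for every α: α ∈ F if and only if α is a set, every element of α belongs to the Cartesian product p of x and y (the unique set with: for every δ, δ ∈ p ↔ there exist β ∈ x and γ ∈ y with δ = mat 1 2 (β, γ)), and for every β with β ∈ x there is exactly one γ with γ ∈ y and mat 1 2 (β, γ) ∈ α. (Existence of the function space y^x in SMT.) -/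
theorem functionSpace_exists_general {V : Type*} (mem : V → V → Prop) (IsSet : V → Prop)
    (mat : ∀ m n : ℕ, (Fin m → Fin n → V) → V)
    (hSep : ∀ x, IsSet x → ∀ Φ : V → Prop,
      ∃ y, IsSet y ∧ ∀ α, mem α y ↔ mem α x ∧ Φ α)
    (hPow : ∀ x, IsSet x →
      ∃ P, IsSet P ∧ ∀ z, mem z P ↔ IsSet z ∧ ∀ w, mem w z → mem w x) :
    ∀ x y, IsSet x → IsSet y →
      ∀ p, IsSet p →
        (∀ δ, mem δ p ↔ ∃ β γ, mem β x ∧ mem γ y ∧ δ = mat 1 2 ![![β, γ]]) →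
        ∃ F, IsSet F ∧ ∀ α, mem α F ↔
          (IsSet α ∧ (∀ w, mem w α → mem w p) ∧
            ∀ β, mem β x → ∃! γ, mem γ y ∧ mem (mat 1 2 ![![β, γ]]) α) := by
  intro x y _ _ p hp _
  obtain ⟨P, hP, mem_P⟩ := hPow p hp
  obtain ⟨F, hF, mem_F⟩ := hSep P hP
    fun α ↦ ∀ β, mem β x → ∃! γ, mem γ y ∧ mem (mat 1 2 ![![β, γ]]) α
  exact ⟨F, hF, fun α ↦ by rw [mem_F, mem_P, and_assoc]⟩

theorem functionSpace_exists {V : Type*} (mem : V → V → Prop) (IsSet : V → Prop)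
    (mat : ∀ m n : ℕ, (Fin m → Fin n → V) → V)
    (hExtSet : ∀ x y, IsSet x → IsSet y → (∀ α, mem α x ↔ mem α y) → x = y)
    (hPair : ∀ α β, ∃ p, IsSet p ∧ ∀ γ, mem γ p ↔ γ = α ∨ γ = β)
    (hSum : ∀ x, IsSet x → (∀ α, mem α x → IsSet α) →
      ∃ u, IsSet u ∧ ∀ β, mem β u ↔ ∃ z, mem z x ∧ mem β z)
    (hSetOfMat : ∀ x, IsSet x → ∀ m n : ℕ, 0 < m → 0 < n →
      ∃ M, IsSet M ∧ ∀ β, mem β M ↔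
        ∃ A : Fin m → Fin n → V, (∀ i j, mem (A i j) x) ∧ β = mat m n A)
    (hSep : ∀ x, IsSet x → ∀ Φ : V → Prop,
      ∃ y, IsSet y ∧ ∀ α, mem α y ↔ mem α x ∧ Φ α)
    (hPow : ∀ x, IsSet x →
      ∃ P, IsSet P ∧ ∀ z, mem z P ↔ IsSet z ∧ ∀ w, mem w z → mem w x) :
    ∀ x y, IsSet x → IsSet y →
      ∀ p, IsSet p →
        (∀ δ, mem δ p ↔ ∃ β γ, mem β x ∧ mem γ y ∧ δ = mat 1 2 ![![β, γ]]) →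
        ∃ F, IsSet F ∧ ∀ α, mem α F ↔
          (IsSet α ∧ (∀ w, mem w α → mem w p) ∧
            ∀ β, mem β x → ∃! γ, mem γ y ∧ mem (mat 1 2 ![![β, γ]]) α) :=
  functionSpace_exists_general mem IsSet mat hSep hPow
end

section
/- For all x y z : ZFSet, if x, y and z are nonempty, then ZFSet.prod (ZFSet.prod x y) z ≠ ZFSet.prod x (ZFSet.prod y z); that is, in ZF the sets (x × y) × z and x × (y × z) are different sets. -/
/-!
If `(x × y) × z = x × (y × z)` with `y`, `z` nonempty, then for `b ∈ y`, `c ∈ z` every `a ∈ x`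
gives `(a, (b, c)) ∈ (x × y) × z`, so `a` is itself a pair `(a', b')` with `a' ∈ x`. Since
`a' ∈ {a'} ∈ (a', b')`, every element of `x` has an `∈`-ancestor in `x`, which contradicts
well-foundedness of `∈` once `x` is nonempty.
-/

namespace ZFSet

theorem transGen_mem_pair_left (a b : ZFSet) :
    Relation.TransGen (· ∈ ·) a (pair a b) :=
  .head (mem_singleton.2 rfl) (.single (mem_insert _ _))

theorem exists_pair_of_mem_of_prod_prod_eq {x y z a b c : ZFSet}
    (h : prod (prod x y) z = prod x (prod y z)) (hb : b ∈ y) (hc : c ∈ z) (ha : a ∈ x) :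
    ∃ a' ∈ x, ∃ b', a = pair a' b' := by
  have hmem : pair a (pair b c) ∈ prod (prod x y) z :=
    h ▸ pair_mem_prod.2 ⟨ha, pair_mem_prod.2 ⟨hb, hc⟩⟩
  obtain ⟨p, hp, _, _, hpair⟩ := mem_prod.1 hmem
  obtain ⟨a', ha', b', _, rfl⟩ := mem_prod.1 hp
  exact ⟨a', ha', b', (pair_inj.1 hpair).1⟩

end ZFSet

theorem prod_prod_ne_prod_prod (x y z : ZFSet)
    (hx : ∃ a, a ∈ x) (hy : ∃ b, b ∈ y) (hz : ∃ c, c ∈ z) :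
    ZFSet.prod (ZFSet.prod x y) z ≠ ZFSet.prod x (ZFSet.prod y z) := by
  obtain ⟨b, hb⟩ := hy
  obtain ⟨c, hc⟩ := hz
  intro h
  obtain ⟨m, hm, hmin⟩ := ZFSet.mem_wf.transGen.has_min {a | a ∈ x} hx
  obtain ⟨a', ha', b', rfl⟩ := ZFSet.exists_pair_of_mem_of_prod_prod_eq h hb hc hm
  exact hmin a' ha' (ZFSet.transGen_mem_pair_left a' b')
end

section
/- In every SMT-structure satisfying (ShapeSep), (Collection) and (Sum), for every set x and every family of predicates ψ assigning to each pair of positive integers (m, n) a predicate ψ m n : (Fin m → Fin n → V) → Prop, there is a set y such that for every α: α ∈ y if and only if α ∈ x and there exist m, n and a set-entried A : Fin m → Fin n → V with α = mat m n A and ψ m n A. (Proposition: any subset of a set made up of infinitely many different types of set matrices, whose defining condition varies with the matrix shape, is constructible in SMT by combining shape-by-shape separation, substitution and sum set.) -/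
/-!
Separate `x` shape by shape, obtaining for each `(m, n)` a set `y m n` of the matching
`m × n` matrices; collect these sets into one set by (Collection) and take its union by (Sum).
-/

section SetMatrixTheory

variable {V : Type*} (mem : V → V → Prop) (IsSet : V → Prop)

theorem exists_shape_family_of_forall_pos [Nonempty V] {P : ℕ → ℕ → V → Prop}
    (h : ∀ m n : ℕ, 0 < m → 0 < n → ∃ y, P m n y) :
    ∃ y : ℕ → ℕ → V, ∀ m n : ℕ, 0 < m → 0 < n → P m n (y m n) := by
  have h' : ∀ m n : ℕ, ∃ y, 0 < m → 0 < n → P m n y := by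
    intro m n
    by_cases hmn : 0 < m ∧ 0 < n
    · obtain ⟨y, hy⟩ := h m n hmn.1 hmn.2
      exact ⟨y, fun _ _ => hy⟩
    · exact ⟨Classical.arbitrary V, fun hm hn => absurd ⟨hm, hn⟩ hmn⟩
  choose y hy using h'
  exact ⟨y, hy⟩

theorem exists_union_of_shape_family
    (hCollection : ∀ y : ℕ → ℕ → V, (∀ m n : ℕ, 0 < m → 0 < n → IsSet (y m n)) →
      ∃ Y, IsSet Y ∧ ∀ β, mem β Y ↔ ∃ m n : ℕ, 0 < m ∧ 0 < n ∧ β = y m n)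
    (hSum : ∀ x, IsSet x → (∀ α, mem α x → IsSet α) →
      ∃ u, IsSet u ∧ ∀ β, mem β u ↔ ∃ z, mem z x ∧ mem β z)
    (y : ℕ → ℕ → V) (hy : ∀ m n : ℕ, 0 < m → 0 < n → IsSet (y m n)) :
    ∃ u, IsSet u ∧ ∀ β, mem β u ↔ ∃ m n : ℕ, 0 < m ∧ 0 < n ∧ mem β (y m n) := by
  obtain ⟨Y, hY, hmemY⟩ := hCollection y hy
  have hY_sets : ∀ z, mem z Y → IsSet z := by
    intro z hz
    obtain ⟨m, n, hm, hn, rfl⟩ := (hmemY z).1 hz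
    exact hy m n hm hn
  obtain ⟨u, hu, hmemu⟩ := hSum Y hY hY_sets
  refine ⟨u, hu, fun β => (hmemu β).trans ⟨?_, ?_⟩⟩
  · rintro ⟨z, hz, hβz⟩
    obtain ⟨m, n, hm, hn, rfl⟩ := (hmemY z).1 hz
    exact ⟨m, n, hm, hn, hβz⟩
  · rintro ⟨m, n, hm, hn, hβ⟩
    exact ⟨y m n, (hmemY _).2 ⟨m, n, hm, hn, rfl⟩, hβ⟩

end SetMatrixTheory

theorem shape_dependent_separation {V : Type*} (mem : V → V → Prop) (IsSet : V → Prop)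
    (mat : ∀ m n : ℕ, (Fin m → Fin n → V) → V)
    (hShapeSep : ∀ x, IsSet x → ∀ m n : ℕ, 0 < m → 0 < n →
      ∀ ψ : (Fin m → Fin n → V) → Prop,
        ∃ y, IsSet y ∧ ∀ α, mem α y ↔ mem α x ∧
          ∃ A : Fin m → Fin n → V, (∀ i j, IsSet (A i j)) ∧ α = mat m n A ∧ ψ A)
    (hCollection : ∀ y : ℕ → ℕ → V, (∀ m n : ℕ, 0 < m → 0 < n → IsSet (y m n)) →
      ∃ Y, IsSet Y ∧ ∀ β, mem β Y ↔ ∃ m n : ℕ, 0 < m ∧ 0 < n ∧ β = y m n)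
    (hSum : ∀ x, IsSet x → (∀ α, mem α x → IsSet α) →
      ∃ u, IsSet u ∧ ∀ β, mem β u ↔ ∃ z, mem z x ∧ mem β z) :
    ∀ x, IsSet x → ∀ ψ : ∀ m n : ℕ, (Fin m → Fin n → V) → Prop,
      ∃ y, IsSet y ∧ ∀ α, mem α y ↔ mem α x ∧
        ∃ m n : ℕ, 0 < m ∧ 0 < n ∧
          ∃ A : Fin m → Fin n → V, (∀ i j, IsSet (A i j)) ∧ α = mat m n A ∧ ψ m n A := by
  intro x hx ψ
  have : Nonempty V := ⟨x⟩
  obtain ⟨y, hy⟩ := exists_shape_family_of_forall_pos fun m n hm hn =>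
    hShapeSep x hx m n hm hn (ψ m n)
  obtain ⟨u, hu, hmemu⟩ :=
    exists_union_of_shape_family mem IsSet hCollection hSum y fun m n hm hn => (hy m n hm hn).1
  refine ⟨u, hu, fun α => (hmemu α).trans ⟨?_, ?_⟩⟩
  · rintro ⟨m, n, hm, hn, hα⟩
    obtain ⟨hαx, hA⟩ := ((hy m n hm hn).2 α).1 hα
    exact ⟨hαx, m, n, hm, hn, hA⟩
  · rintro ⟨hαx, m, n, hm, hn, hA⟩
    exact ⟨m, n, hm, hn, ((hy m n hm hn).2 α).2 ⟨hαx, hA⟩⟩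
end

section
/- In every SMT-structure satisfying (ShapeSep), (ShapeRepl), (Collection) and (Sum), for every set x and every family of functions G assigning to each pair of positive integers (m, n) a function G m n : (Fin m → Fin n → V) → V, there is a set y such that for every β: β ∈ y if and only if there exist m, n and a set-entried A : Fin m → Fin n → V with mat m n A ∈ x and β = G m n A. (Proposition: the image of a set made up of infinitely many different types of set matrices under a shape-dependent functional relation is constructible in SMT.) -/
/-!
Replacement applied shape by shape gives, for each positive shape `(m, n)`, the set of values
`G m n A` over the `m × n` matrices of `x`; Collection gathers these countably many sets into one
set, and Sum takes its union.
-/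

theorem exists_set_iUnion_pos_shapes {V : Type*} (mem : V → V → Prop) (IsSet : V → Prop)
    (hCollection : ∀ y : ℕ → ℕ → V, (∀ m n : ℕ, 0 < m → 0 < n → IsSet (y m n)) →
      ∃ Y, IsSet Y ∧ ∀ β, mem β Y ↔ ∃ m n : ℕ, 0 < m ∧ 0 < n ∧ β = y m n)
    (hSum : ∀ x, IsSet x → (∀ α, mem α x → IsSet α) →
      ∃ u, IsSet u ∧ ∀ β, mem β u ↔ ∃ z, mem z x ∧ mem β z)
    (y : ℕ → ℕ → V) (hy : ∀ m n : ℕ, 0 < m → 0 < n → IsSet (y m n)) :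
    ∃ u, IsSet u ∧ ∀ β, mem β u ↔ ∃ m n : ℕ, 0 < m ∧ 0 < n ∧ mem β (y m n) := by
  obtain ⟨Y, hYset, hYmem⟩ := hCollection y hy
  obtain ⟨u, huset, humem⟩ := hSum Y hYset fun α hα => by
    obtain ⟨m, n, hm, hn, rfl⟩ := (hYmem α).1 hα
    exact hy m n hm hn
  refine ⟨u, huset, fun β => (humem β).trans ⟨?_, ?_⟩⟩
  · rintro ⟨z, hz, hβz⟩
    obtain ⟨m, n, hm, hn, rfl⟩ := (hYmem z).1 hz
    exact ⟨m, n, hm, hn, hβz⟩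
  · rintro ⟨m, n, hm, hn, hβ⟩
    exact ⟨y m n, (hYmem _).2 ⟨m, n, hm, hn, rfl⟩, hβ⟩

theorem shape_dependent_replacement_general {V : Type*} (mem : V → V → Prop) (IsSet : V → Prop)
    (mat : ∀ m n : ℕ, (Fin m → Fin n → V) → V)
    (hShapeRepl : ∀ w, IsSet w → ∀ m n : ℕ, 0 < m → 0 < n →
      ∀ G : (Fin m → Fin n → V) → V,
        ∃ v, IsSet v ∧ ∀ β, mem β v ↔
          ∃ A : Fin m → Fin n → V, (∀ i j, IsSet (A i j)) ∧ mem (mat m n A) w ∧ β = G A)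
    (hCollection : ∀ y : ℕ → ℕ → V, (∀ m n : ℕ, 0 < m → 0 < n → IsSet (y m n)) →
      ∃ Y, IsSet Y ∧ ∀ β, mem β Y ↔ ∃ m n : ℕ, 0 < m ∧ 0 < n ∧ β = y m n)
    (hSum : ∀ x, IsSet x → (∀ α, mem α x → IsSet α) →
      ∃ u, IsSet u ∧ ∀ β, mem β u ↔ ∃ z, mem z x ∧ mem β z) :
    ∀ x, IsSet x → ∀ G : ∀ m n : ℕ, (Fin m → Fin n → V) → V,
      ∃ y, IsSet y ∧ ∀ β, mem β y ↔
        ∃ m n : ℕ, 0 < m ∧ 0 < n ∧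
          ∃ A : Fin m → Fin n → V, (∀ i j, IsSet (A i j)) ∧ mem (mat m n A) x ∧
            β = G m n A := by
  intro x hx G
  have : Nonempty V := ⟨x⟩
  choose! v hvset hvmem using fun m n (hm : 0 < m) (hn : 0 < n) =>
    hShapeRepl x hx m n hm hn (G m n)
  obtain ⟨u, huset, humem⟩ := exists_set_iUnion_pos_shapes mem IsSet hCollection hSum v hvset
  refine ⟨u, huset, fun β => (humem β).trans <| exists₂_congr fun m n => ?_⟩
  exact and_congr_right fun hm => and_congr_right fun hn => hvmem m n hm hn β

theorem shape_dependent_replacement {V : Type*} (mem : V → V → Prop) (IsSet : V → Prop)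
    (mat : ∀ m n : ℕ, (Fin m → Fin n → V) → V)
    (hShapeSep : ∀ x, IsSet x → ∀ m n : ℕ, 0 < m → 0 < n →
      ∀ ψ : (Fin m → Fin n → V) → Prop,
        ∃ y, IsSet y ∧ ∀ α, mem α y ↔ mem α x ∧
          ∃ A : Fin m → Fin n → V, (∀ i j, IsSet (A i j)) ∧ α = mat m n A ∧ ψ A)
    (hShapeRepl : ∀ w, IsSet w → ∀ m n : ℕ, 0 < m → 0 < n →
      ∀ G : (Fin m → Fin n → V) → V,
        ∃ v, IsSet v ∧ ∀ β, mem β v ↔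
          ∃ A : Fin m → Fin n → V, (∀ i j, IsSet (A i j)) ∧ mem (mat m n A) w ∧ β = G A)
    (hCollection : ∀ y : ℕ → ℕ → V, (∀ m n : ℕ, 0 < m → 0 < n → IsSet (y m n)) →
      ∃ Y, IsSet Y ∧ ∀ β, mem β Y ↔ ∃ m n : ℕ, 0 < m ∧ 0 < n ∧ β = y m n)
    (hSum : ∀ x, IsSet x → (∀ α, mem α x → IsSet α) →
      ∃ u, IsSet u ∧ ∀ β, mem β u ↔ ∃ z, mem z x ∧ mem β z) :
    ∀ x, IsSet x → ∀ G : ∀ m n : ℕ, (Fin m → Fin n → V) → V,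
      ∃ y, IsSet y ∧ ∀ β, mem β y ↔
        ∃ m n : ℕ, 0 < m ∧ 0 < n ∧
          ∃ A : Fin m → Fin n → V, (∀ i j, IsSet (A i j)) ∧ mem (mat m n A) x ∧
            β = G m n A :=
  shape_dependent_replacement_general mem IsSet mat hShapeRepl hCollection hSum
end

section
/- In every SMT-structure satisfying (ExtMat) and (NotSet), for all sets S, T, U and every set R such that every element of R equals mat 1 3 (mat 2 1 (a, b), mat 2 1 (f, g), mat 2 1 (u, v)) for some sets a, b, f, g, u, v (a 1×3 matrix whose three entries are set-entried 2×1 matrices), the 1×3 matrix mat 1 3 (S, T, U) is not an element of R. (This is the core of the paper's claim that, in SMT, from a relation R holding only between 2×1 set matrices no corresponding statement about sets S, T, U can be derived.) -/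
section SetMatrix

variable {V : Type*} {IsSet : V → Prop} {mat : ∀ m n : ℕ, (Fin m → Fin n → V) → V}

theorem row_eq_of_mat_eq
    (hExtMat : ∀ (m n : ℕ) (A B : Fin m → Fin n → V), mat m n A = mat m n B → A = B)
    {n : ℕ} {x y : Fin n → V} (h : mat 1 n ![x] = mat 1 n ![y]) : x = y :=
  congrFun (hExtMat 1 n _ _ h) 0

theorem not_isSet_mat_two_one
    (hNotSet : ∀ (m n : ℕ) (A : Fin m → Fin n → V), 2 ≤ m * n →
      (∀ i j, IsSet (A i j)) → ¬ IsSet (mat m n A))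
    {a b : V} (ha : IsSet a) (hb : IsSet b) : ¬ IsSet (mat 2 1 ![![a], ![b]]) := by
  refine hNotSet 2 1 _ le_rfl fun i j => ?_
  fin_cases i <;> fin_cases j <;> assumption

end SetMatrix

theorem sentence_about_sets_not_derivable {V : Type*} (mem : V → V → Prop)
    (IsSet : V → Prop) (mat : ∀ m n : ℕ, (Fin m → Fin n → V) → V)
    (hExtMat : ∀ (m n : ℕ) (A B : Fin m → Fin n → V), mat m n A = mat m n B → A = B)
    (hNotSet : ∀ (m n : ℕ) (A : Fin m → Fin n → V), 2 ≤ m * n →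
      (∀ i j, IsSet (A i j)) → ¬ IsSet (mat m n A)) :
    ∀ S T U : V, IsSet S → IsSet T → IsSet U →
      ∀ R : V, IsSet R →
        (∀ ρ, mem ρ R → ∃ a b f g u v, IsSet a ∧ IsSet b ∧ IsSet f ∧ IsSet g ∧
          IsSet u ∧ IsSet v ∧
          ρ = mat 1 3 ![![mat 2 1 ![![a], ![b]],
                          mat 2 1 ![![f], ![g]],
                          mat 2 1 ![![u], ![v]]]]) →
        ¬ mem (mat 1 3 ![![S, T, U]]) R := by
  intro S T U hS _ _ R _ hR hmem
  obtain ⟨a, b, _, _, _, _, ha, hb, -, -, -, -, hρ⟩ := hR _ hmem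
  have hS_eq : S = mat 2 1 ![![a], ![b]] := congrFun (row_eq_of_mat_eq hExtMat hρ) 0
  exact not_isSet_mat_two_one hNotSet ha hb (hS_eq ▸ hS)
end
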